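/- arXiv:0801.1445 — 2 statements merged into one kernel-verified Lean document; each statement's English description precedes it below -/
import Mathlib

section
/- Let k be a nonzero integer, N a positive integer, L : Fin N → Fin N → ℤ a symmetric matrix with integer entries (the linking matrix), and q : Fin N → ℤ a vector of charges. Then the quantity exp(-(2πi/(4k)) · Σ_{i,j} q i · L i j · q j) is unchanged if any single charge q a is replaced by q a + 2k. -/
/-! Shifting the charge `q a` by `c` changes `∑ i j, q i * L i j * q j` by
`c * (2 * (L q)_a + c * L a a)`, symmetry of `L` merging the row and column terms. For `c = 2k`
the change is `4k` times an integer, which is a period of the exponent `-(2πi / 4k) · _`. -/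

open Complex Finset

theorem sum_sum_update_add_mul_mul {ι R : Type*} [Fintype ι] [DecidableEq ι] [CommRing R]
    (L : ι → ι → R) (hL : ∀ i j, L i j = L j i) (q : ι → R) (a : ι) (c : R) :
    ∑ i, ∑ j, Function.update q a (q a + c) i * L i j * Function.update q a (q a + c) j =
      ∑ i, ∑ j, q i * L i j * q j + c * (2 * ∑ j, L a j * q j + c * L a a) := by
  have hupd : ∀ i, Function.update q a (q a + c) i = q i + if i = a then c else 0 := by
    intro i
    by_cases h : i = a <;> simp [h]
  have hcol : ∑ i, q i * L i a = ∑ j, L a j * q j :=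
    sum_congr rfl fun i _ => by rw [hL, mul_comm]
  have hrow : ∑ j, c * L a j * q j = c * ∑ j, L a j * q j := by
    simp only [mul_sum, mul_assoc]
  simp only [hupd, add_mul, mul_add, sum_add_distrib, ite_mul, mul_ite, zero_mul, mul_zero,
    sum_ite_irrel, sum_const_zero, sum_ite_eq', mem_univ, if_true]
  rw [← sum_mul, hcol, hrow]
  ring

theorem exp_neg_two_pi_I_div_mul_eq_of_eq_add {k : ℤ} (hk : k ≠ 0) {m n t : ℤ}
    (h : m = n + 4 * k * t) :
    exp (-(2 * Real.pi * I / (4 * k)) * m) = exp (-(2 * Real.pi * I / (4 * k)) * n) := by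
  have hk' : (k : ℂ) ≠ 0 := Int.cast_ne_zero.mpr hk
  rw [exp_eq_exp_iff_exists_int]
  refine ⟨-t, ?_⟩
  rw [h]
  push_cast
  field_simp
  ring

theorem colour_periodicity_general (k : ℤ) (hk : k ≠ 0) (N : ℕ)
    (L : Fin N → Fin N → ℤ) (hsym : ∀ i j, L i j = L j i)
    (q : Fin N → ℤ) (a : Fin N) :
    Complex.exp (-(2 * Real.pi * Complex.I / (4 * k)) *
        ∑ i, ∑ j, (q i : ℂ) * (L i j : ℂ) * (q j : ℂ)) =
    Complex.exp (-(2 * Real.pi * Complex.I / (4 * k)) *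
        ∑ i, ∑ j, ((Function.update q a (q a + 2 * k)) i : ℂ) * (L i j : ℂ) *
          ((Function.update q a (q a + 2 * k)) j : ℂ)) := by
  have hshift : ∑ i, ∑ j, Function.update q a (q a + 2 * k) i * L i j *
        Function.update q a (q a + 2 * k) j =
      ∑ i, ∑ j, q i * L i j * q j + 4 * k * (∑ j, L a j * q j + k * L a a) := by
    rw [sum_sum_update_add_mul_mul L hsym q a (2 * k)]
    ring
  have hexp := exp_neg_two_pi_I_div_mul_eq_of_eq_add hk hshift
  push_cast at hexp
  exact hexp.symm

/-- Colour periodicity: the abelian Chern–Simons observable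
exp(-(2πi/4k) Σ q_i L_{ij} q_j) is unchanged when a single charge is shifted by 2k. -/
theorem colour_periodicity (k : ℤ) (hk : k ≠ 0) (N : ℕ) (hN : 0 < N)
    (L : Fin N → Fin N → ℤ) (hsym : ∀ i j, L i j = L j i)
    (q : Fin N → ℤ) (a : Fin N) :
    Complex.exp (-(2 * Real.pi * Complex.I / (4 * k)) *
        ∑ i, ∑ j, (q i : ℂ) * (L i j : ℂ) * (q j : ℂ)) =
    Complex.exp (-(2 * Real.pi * Complex.I / (4 * k)) *
        ∑ i, ∑ j, ((Function.update q a (q a + 2 * k)) i : ℂ) * (L i j : ℂ) *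
          ((Function.update q a (q a + 2 * k)) j : ℂ)) :=
  colour_periodicity_general k hk N L hsym q a
end

section
/- Let k be a nonzero integer, L : Fin N → Fin N → ℤ symmetric, and q, q' : Fin N → ℤ with q' i - q i ≡ 0 mod 2k for all i. Then exp(-(2πi/(4k)) · Σ_{i,j} q i · L i j · q j) = exp(-(2πi/(4k)) · Σ_{i,j} q' i · L i j · q' j). -/
open Complex Finset

/-
Writing `q' = q + 2k m`, symmetry of `L` merges the two cross terms of the quadratic form, so
`q'ᵀ L q' = qᵀ L q + 4k (mᵀ L q + k mᵀ L m)`; the exponent therefore changes by an integer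
multiple of `2πi`.
-/

theorem sum_sum_quadratic_add_mul_of_symm {R ι : Type*} [CommRing R] [Fintype ι]
    (L : ι → ι → R) (hL : ∀ i j, L i j = L j i) (q m : ι → R) (c : R) :
    ∑ i, ∑ j, (q i + c * m i) * L i j * (q j + c * m j) =
      ∑ i, ∑ j, q i * L i j * q j +
        c * (2 * ∑ i, ∑ j, m i * L i j * q j + c * ∑ i, ∑ j, m i * L i j * m j) := by
  have hcross : ∑ i, ∑ j, q i * L i j * m j = ∑ i, ∑ j, m i * L i j * q j := by
    rw [Finset.sum_comm]
    refine Finset.sum_congr rfl fun i _ => Finset.sum_congr rfl fun j _ => ?_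
    rw [hL]; ring
  have hexpand : ∀ i j, (q i + c * m i) * L i j * (q j + c * m j) =
      q i * L i j * q j + c * (m i * L i j * q j) + c * (q i * L i j * m j) +
        c ^ 2 * (m i * L i j * m j) := fun i j => by ring
  simp only [hexpand, Finset.sum_add_distrib, ← Finset.mul_sum, hcross]
  ring

theorem Complex.periodic_exp_neg_two_pi_I_div_mul (a : ℂ) :
    Function.Periodic (fun z => exp (-(2 * Real.pi * I / a) * z)) a := by
  intro z
  rcases eq_or_ne a 0 with rfl | ha
  · simp
  · have : -(2 * Real.pi * I / a) * (z + a) = -(2 * Real.pi * I / a) * z - 2 * Real.pi * I := by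
      field_simp; ring
    simp only [this, exp_sub, exp_two_pi_mul_I, div_one]

theorem colour_mod_2k_general (k : ℤ) (N : ℕ)
    (L : Fin N → Fin N → ℤ) (hsym : ∀ i j, L i j = L j i)
    (q q' : Fin N → ℤ) (hq : ∀ i, (2 * k) ∣ (q' i - q i)) :
    Complex.exp (-(2 * Real.pi * Complex.I / (4 * k)) *
        ∑ i, ∑ j, (q i : ℂ) * (L i j : ℂ) * (q j : ℂ)) =
    Complex.exp (-(2 * Real.pi * Complex.I / (4 * k)) *
        ∑ i, ∑ j, (q' i : ℂ) * (L i j : ℂ) * (q' j : ℂ)) := by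
  choose m hm using hq
  obtain rfl : q' = fun i => q i + 2 * k * m i := funext fun i => by linarith [hm i]
  set n := ∑ i, ∑ j, m i * L i j * q j + k * ∑ i, ∑ j, m i * L i j * m j
  have hshift : ∑ i, ∑ j, (q i + 2 * k * m i) * L i j * (q j + 2 * k * m j) =
      ∑ i, ∑ j, q i * L i j * q j + n * (4 * k) := by
    rw [sum_sum_quadratic_add_mul_of_symm L hsym]; ring
  have hshiftC :
      ∑ i, ∑ j, ((q i + 2 * k * m i : ℤ) : ℂ) * L i j * ((q j + 2 * k * m j : ℤ) : ℂ) =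
        ∑ i, ∑ j, (q i : ℂ) * L i j * q j + n * (4 * k) := by
    exact_mod_cast hshift
  rw [hshiftC]
  exact (((periodic_exp_neg_two_pi_I_div_mul _).int_mul n) _).symm

/-- The abelian Chern–Simons invariant depends on the charges only mod 2k. -/
theorem colour_mod_2k (k : ℤ) (hk : k ≠ 0) (N : ℕ)
    (L : Fin N → Fin N → ℤ) (hsym : ∀ i j, L i j = L j i)
    (q q' : Fin N → ℤ) (hq : ∀ i, (2 * k) ∣ (q' i - q i)) :
    Complex.exp (-(2 * Real.pi * Complex.I / (4 * k)) *
        ∑ i, ∑ j, (q i : ℂ) * (L i j : ℂ) * (q j : ℂ)) =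
    Complex.exp (-(2 * Real.pi * Complex.I / (4 * k)) *
        ∑ i, ∑ j, (q' i : ℂ) * (L i j : ℂ) * (q' j : ℂ)) :=
  colour_mod_2k_general k N L hsym q q' hq
end
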